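/- (Quantum Schur–Weyl commutation on the spin chain.) Let E ∈ End(ℂ² ⊗ ℂ²) be the matrix, in the basis (++, +−, −+, −−), E = [[0,0,0,0],[0,q^{−1},−1,0],[0,−1,q,0],[0,0,0,0]], and for 1 ≤ i ≤ n−1 let E_i = 1^{⊗(i−1)} ⊗ E ⊗ 1^{⊗(n−i−1)} ∈ End(V). Then E_i S^+ = S^+ E_i and E_i S^− = S^− E_i for every 1 ≤ i ≤ n−1. -/
import Mathlib


open Matrix Filter Topology BigOperators Finset

noncomputable section

/-- Spin configurations: basis labels of `(ℂ²)^{⊗n}`; `0` is `+`, `1` is `−`. -/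
abbrev Spins (n : ℕ) := Fin n → Fin 2

/-- σ⁺ = [[0,1],[0,0]] -/
def sigmaP : Matrix (Fin 2) (Fin 2) ℂ := fun a b => if a = 0 ∧ b = 1 then 1 else 0

/-- σ⁻ = [[0,0],[1,0]] -/
def sigmaM : Matrix (Fin 2) (Fin 2) ℂ := fun a b => if a = 1 ∧ b = 0 then 1 else 0

/-- diagonal entry of K = diag(v, v⁻¹) -/
def Kdiag (v : ℂ) (a : Fin 2) : ℂ := if a = 0 then v else v⁻¹

/-- `S_i^A = K^{⊗(i−1)} ⊗ A ⊗ (K⁻¹)^{⊗(n−i)}` as a matrix on `(ℂ²)^{⊗n}`. -/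
def siteOp (n : ℕ) (v : ℂ) (A : Matrix (Fin 2) (Fin 2) ℂ) (i : Fin n) :
    Matrix (Spins n) (Spins n) ℂ :=
  fun x y => ∏ k : Fin n,
    if k < i then (if x k = y k then Kdiag v (x k) else 0)
    else if k = i then A (x k) (y k)
    else (if x k = y k then Kdiag v⁻¹ (x k) else 0)

/-- `S^+ = Σ_i S_i^+`. -/
def SpOp (n : ℕ) (v : ℂ) : Matrix (Spins n) (Spins n) ℂ := ∑ i : Fin n, siteOp n v sigmaP i

/-- `S^- = Σ_i S_i^-`. -/
def SmOp (n : ℕ) (v : ℂ) : Matrix (Spins n) (Spins n) ℂ := ∑ i : Fin n, siteOp n v sigmaM i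

/-- `Σ^z = Σ_i 1 ⊗ ⋯ ⊗ σ^z ⊗ ⋯ ⊗ 1` (diagonal). -/
def SzOp (n : ℕ) : Matrix (Spins n) (Spins n) ℂ :=
  fun x y => if x = y then ∑ k : Fin n, (if x k = 0 then (1 : ℂ) else -1) else 0

/-- symmetric q-number `[k] = (q^k − q^{−k})/(q − q⁻¹)`. -/
def qNum (q : ℂ) (k : ℤ) : ℂ := (q ^ k - q ^ (-k)) / (q - q⁻¹)

/-- q-factorial `[k]! = [k][k−1]⋯[1]`, `[0]! = 1`. -/
def qFact (q : ℂ) : ℕ → ℂ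
  | 0 => 1
  | k + 1 => qNum q (k + 1) * qFact q k

/-- q-binomial `[k choose l]`, zero unless `0 ≤ l ≤ k`. -/
def qBinom (q : ℂ) (k l : ℤ) : ℂ :=
  if 0 ≤ l ∧ l ≤ k then qFact q k.toNat / (qFact q l.toNat * qFact q (k - l).toNat) else 0

/-- `q` is generic: nonzero and not a root of unity. -/
def Generic (q : ℂ) : Prop := q ≠ 0 ∧ ∀ k : ℕ, 0 < k → q ^ k ≠ 1

def GenericSet : Set ℂ := {q | Generic q}

/-- the root of unity `q` is associated with `p`: `p ≥ 2` is minimal with `q^{2p} = 1`. -/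
def AssocRootOfUnity (q : ℂ) (p : ℕ) : Prop :=
  2 ≤ p ∧ q ^ (2 * p) = 1 ∧ ∀ k : ℕ, 0 < k → k < p → q ^ (2 * k) ≠ 1

/-- the coefficient `a_{i,j,m}` of the paper, with `k = j − m` and `s = j + m`:
`a = (−1)^{i+k} [i choose k] [i+s+1 choose i+1]⁻¹ [k+s+1] / [i+1]`. -/
def aCoeff (q : ℂ) (i k s : ℤ) : ℂ :=
  (-1 : ℂ) ^ (i + k) * qBinom q i k * (qBinom q (i + s + 1) (i + 1))⁻¹ *
    qNum q (k + s + 1) / qNum q (i + 1)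

/-- `S_r = (S^−)^r (S^+)^r / ([r]!)²` with `q = v²`. -/
def SOp (n : ℕ) (v : ℂ) (r : ℕ) : Matrix (Spins n) (Spins n) ℂ :=
  ((qFact (v ^ 2) r) ^ 2)⁻¹ • (SmOp n v ^ r * SpOp n v ^ r)

/-- a function of `q` is regular at `q_c` if it has a finite limit as `q → q_c`
through generic values of `q`. -/
def RegularAt (f : ℂ → ℂ) (qc : ℂ) : Prop :=
  ∃ L : ℂ, Tendsto f (𝓝[GenericSet] qc) (𝓝 L)


/-- the matrix `E` on `ℂ² ⊗ ℂ²` in the basis `(++, +−, −+, −−)`: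
`[[0,0,0,0],[0,q⁻¹,−1,0],[0,−1,q,0],[0,0,0,0]]`. -/
def Eloc (q : ℂ) (a b c d : Fin 2) : ℂ :=
  if a = 0 ∧ b = 1 ∧ c = 0 ∧ d = 1 then q⁻¹
  else if a = 0 ∧ b = 1 ∧ c = 1 ∧ d = 0 then -1
  else if a = 1 ∧ b = 0 ∧ c = 0 ∧ d = 1 then -1
  else if a = 1 ∧ b = 0 ∧ c = 1 ∧ d = 0 then q
  else 0

/-- `E_i = 1^{⊗(i−1)} ⊗ E ⊗ 1^{⊗(n−i−1)}`, acting on the two sites `i`, `i+1`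
(0-indexed here). -/
def EOp (n : ℕ) (q : ℂ) (i : ℕ) (h1 : i < n) (h2 : i + 1 < n) :
    Matrix (Spins n) (Spins n) ℂ :=
  fun x y =>
    Eloc q (x ⟨i, h1⟩) (x ⟨i + 1, h2⟩) (y ⟨i, h1⟩) (y ⟨i + 1, h2⟩) *
      ∏ k : Fin n,
        if k = ⟨i, h1⟩ ∨ k = ⟨i + 1, h2⟩ then 1 else if x k = y k then 1 else 0

namespace S19

variable {n : ℕ}

def upd2 (ii jj : Fin n) (x : Spins n) (a b : Fin 2) : Spins n :=
  Function.update (Function.update x ii a) jj b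

lemma upd2_ii (ii jj : Fin n) (h : ii ≠ jj) (x : Spins n) (a b : Fin 2) :
    upd2 ii jj x a b ii = a := by
  simp [upd2, Function.update_of_ne h]

lemma upd2_jj (ii jj : Fin n) (x : Spins n) (a b : Fin 2) :
    upd2 ii jj x a b jj = b := by
  simp [upd2]

lemma upd2_other {ii jj k : Fin n} (hk1 : k ≠ ii) (hk2 : k ≠ jj) (x : Spins n) (a b : Fin 2) :
    upd2 ii jj x a b k = x k := by
  simp [upd2, Function.update_of_ne hk1, Function.update_of_ne hk2]

lemma prod_ind (ii jj : Fin n) (x z : Spins n) :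
    (∏ k : Fin n, if k = ii ∨ k = jj then (1:ℂ) else if x k = z k then 1 else 0)
      = if ∀ k, k ≠ ii → k ≠ jj → x k = z k then 1 else 0 := by
  by_cases h : ∀ k, k ≠ ii → k ≠ jj → x k = z k
  · rw [if_pos h]
    apply Finset.prod_eq_one
    intro k _
    by_cases hk : k = ii ∨ k = jj
    · rw [if_pos hk]
    · push_neg at hk
      rw [if_neg (by push_neg; exact hk), if_pos (h k hk.1 hk.2)]
  · rw [if_neg h]
    push_neg at h
    obtain ⟨k, hk1, hk2, hk3⟩ := h
    apply Finset.prod_eq_zero (Finset.mem_univ k)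
    rw [if_neg (by push_neg; exact ⟨hk1, hk2⟩), if_neg hk3]

lemma collapse (ii jj : Fin n) (hij : ii ≠ jj) (x : Spins n) (g : Spins n → ℂ) :
    ∑ z : Spins n,
        (∏ k : Fin n, if k = ii ∨ k = jj then (1:ℂ) else if x k = z k then 1 else 0) * g z
      = ∑ a : Fin 2, ∑ b : Fin 2, g (upd2 ii jj x a b) := by
  have h1 : ∀ z : Spins n,
      (∏ k : Fin n, if k = ii ∨ k = jj then (1:ℂ) else if x k = z k then 1 else 0) * g z
        = if ∀ k, k ≠ ii → k ≠ jj → x k = z k then g z else 0 := by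
    intro z
    rw [prod_ind]
    split <;> simp
  rw [Finset.sum_congr rfl fun z _ => h1 z, ← Finset.sum_filter, ← Fintype.sum_prod_type']
  -- sum over filter = sum over Fin 2 × Fin 2
  refine Finset.sum_nbij' (fun z => (z ii, z jj)) (fun p => upd2 ii jj x p.1 p.2) ?_ ?_ ?_ ?_ ?_
  · intro z _; exact Finset.mem_univ _
  · intro p _
    simp only [Finset.mem_filter, Finset.mem_univ, true_and]
    intro k hk1 hk2
    rw [upd2_other hk1 hk2]
  · intro z hz
    simp only [Finset.mem_filter, Finset.mem_univ, true_and] at hz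
    show upd2 ii jj x (z ii) (z jj) = z
    funext k
    by_cases hk2 : k = jj
    · subst hk2; rw [upd2_jj]
    · by_cases hk1 : k = ii
      · subst hk1; rw [upd2_ii _ _ hij]
      · rw [upd2_other hk1 hk2, hz k hk1 hk2]
  · intro p _
    show (upd2 ii jj x p.1 p.2 ii, upd2 ii jj x p.1 p.2 jj) = p
    simp [upd2_ii _ _ hij, upd2_jj]
  · intro z hz
    simp only [Finset.mem_filter, Finset.mem_univ, true_and] at hz
    show g z = g (upd2 ii jj x (z ii) (z jj))
    congr 1
    funext k
    by_cases hk2 : k = jj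
    · subst hk2; rw [upd2_jj]
    · by_cases hk1 : k = ii
      · subst hk1; rw [upd2_ii _ _ hij]
      · rw [upd2_other hk1 hk2, hz k hk1 hk2]

end S19

namespace S19

variable {n : ℕ}

/-- local factor of `siteOp`. -/
def fac (v : ℂ) (A : Matrix (Fin 2) (Fin 2) ℂ) (j k : Fin n) (a b : Fin 2) : ℂ :=
  if k < j then (if a = b then Kdiag v a else 0)
  else if k = j then A a b
  else (if a = b then Kdiag v⁻¹ a else 0)

lemma siteOp_eq (v : ℂ) (A : Matrix (Fin 2) (Fin 2) ℂ) (j : Fin n) (x y : Spins n) :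
    siteOp n v A j x y = ∏ k : Fin n, fac v A j k (x k) (y k) := rfl

lemma site_split (ii jj : Fin n) (hij : ii ≠ jj) (v : ℂ) (A : Matrix (Fin 2) (Fin 2) ℂ)
    (j : Fin n) (x y : Spins n) :
    siteOp n v A j x y =
      fac v A j ii (x ii) (y ii) * fac v A j jj (x jj) (y jj) *
        ∏ k ∈ Finset.univ \ {ii, jj}, fac v A j k (x k) (y k) := by
  rw [siteOp_eq, ← Finset.prod_sdiff (Finset.subset_univ {ii, jj}),
    Finset.prod_pair hij]
  ring

lemma fac_lt (v : ℂ) (A : Matrix (Fin 2) (Fin 2) ℂ) {j k : Fin n} (h : k < j) (a b : Fin 2) :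
    fac v A j k a b = if a = b then Kdiag v a else 0 := by
  rw [fac, if_pos h]

lemma fac_self (v : ℂ) (A : Matrix (Fin 2) (Fin 2) ℂ) (j : Fin n) (a b : Fin 2) :
    fac v A j j a b = A a b := by
  rw [fac, if_neg (lt_irrefl j), if_pos rfl]

lemma fac_gt (v : ℂ) (A : Matrix (Fin 2) (Fin 2) ℂ) {j k : Fin n} (h : j < k) (a b : Fin 2) :
    fac v A j k a b = if a = b then Kdiag v⁻¹ a else 0 := by
  rw [fac, if_neg (asymm h), if_neg h.ne']

end S19


namespace S19

lemma swap3 {n : ℕ} (f : Fin 2 → Fin 2 → Fin n → ℂ) :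
    (∑ a : Fin 2, ∑ b : Fin 2, ∑ j : Fin n, f a b j)
      = ∑ j : Fin n, ∑ a : Fin 2, ∑ b : Fin 2, f a b j := by
  have h1 : ∀ a : Fin 2, (∑ b : Fin 2, ∑ j : Fin n, f a b j)
      = ∑ j : Fin n, ∑ b : Fin 2, f a b j := fun a => Finset.sum_comm
  rw [Finset.sum_congr rfl fun a _ => h1 a]
  exact Finset.sum_comm

lemma loc1 (v u : ℂ) (hu : u ≠ 0) (p q r s : Fin 2) :
    ∑ a : Fin 2, ∑ b : Fin 2, Eloc (v ^ 2) p q a b *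
        ((if a = r then Kdiag u a else 0) * (if b = s then Kdiag u b else 0))
      = ∑ a : Fin 2, ∑ b : Fin 2,
        ((if p = a then Kdiag u p else 0) * (if q = b then Kdiag u q else 0)) *
          Eloc (v ^ 2) a b r s := by
  fin_cases p <;> fin_cases q <;> fin_cases r <;> fin_cases s <;>
    simp [Eloc, Kdiag, Fin.sum_univ_two] <;> field_simp

lemma comm_general (n : ℕ) (v : ℂ) (hv : v ≠ 0) (i : ℕ) (h1 : i < n) (h2 : i + 1 < n)
    (A : Matrix (Fin 2) (Fin 2) ℂ)
    (hloc : ∀ p q r s : Fin 2,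
      ((∑ a : Fin 2, ∑ b : Fin 2, Eloc (v ^ 2) p q a b *
          (A a r * (if b = s then Kdiag v⁻¹ b else 0))) +
       (∑ a : Fin 2, ∑ b : Fin 2, Eloc (v ^ 2) p q a b *
          ((if a = r then Kdiag v a else 0) * A b s)))
      = ((∑ a : Fin 2, ∑ b : Fin 2,
          (A p a * (if q = b then Kdiag v⁻¹ q else 0)) * Eloc (v ^ 2) a b r s) +
         (∑ a : Fin 2, ∑ b : Fin 2,
          ((if p = a then Kdiag v p else 0) * A q b) * Eloc (v ^ 2) a b r s))) :
    EOp n (v ^ 2) i h1 h2 * (∑ j : Fin n, siteOp n v A j) =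
      (∑ j : Fin n, siteOp n v A j) * EOp n (v ^ 2) i h1 h2 := by
  have hii : (⟨i, h1⟩ : Fin n) = ⟨i, h1⟩ := rfl
  set ii : Fin n := ⟨i, h1⟩ with hiidef
  set jj : Fin n := ⟨i + 1, h2⟩ with hjjdef
  have hij : ii ≠ jj := by simp [hiidef, hjjdef, Fin.ext_iff]
  have hlt : ii < jj := by simp [hiidef, hjjdef, Fin.lt_def]
  ext x y
  rw [Matrix.mul_apply, Matrix.mul_apply]
  have key1 : ∀ z : Spins n, EOp n (v ^ 2) i h1 h2 x z * (∑ j : Fin n, siteOp n v A j) z y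
      = (∏ k : Fin n, if k = ii ∨ k = jj then (1:ℂ) else if x k = z k then 1 else 0)
        * (Eloc (v ^ 2) (x ii) (x jj) (z ii) (z jj) * ∑ j : Fin n, siteOp n v A j z y) := by
    intro z
    simp only [EOp, Matrix.sum_apply]
    ring
  have key2 : ∀ z : Spins n, (∑ j : Fin n, siteOp n v A j) x z * EOp n (v ^ 2) i h1 h2 z y
      = (∏ k : Fin n, if k = ii ∨ k = jj then (1:ℂ) else if y k = z k then 1 else 0)
        * ((∑ j : Fin n, siteOp n v A j x z) * Eloc (v ^ 2) (z ii) (z jj) (y ii) (y jj)) := by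
    intro z
    simp only [EOp, Matrix.sum_apply]
    have flip : (∏ k : Fin n, if k = ii ∨ k = jj then (1:ℂ) else if z k = y k then 1 else 0)
        = ∏ k : Fin n, if k = ii ∨ k = jj then (1:ℂ) else if y k = z k then 1 else 0 := by
      refine Finset.prod_congr rfl fun k _ => ?_
      simp [eq_comm]
    rw [← flip]
    ring
  rw [Finset.sum_congr rfl fun z _ => key1 z,
    collapse ii jj hij x
      (fun z => Eloc (v ^ 2) (x ii) (x jj) (z ii) (z jj) * ∑ j : Fin n, siteOp n v A j z y),
    Finset.sum_congr rfl fun z _ => key2 z,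
    collapse ii jj hij y
      (fun z => (∑ j : Fin n, siteOp n v A j x z) * Eloc (v ^ 2) (z ii) (z jj) (y ii) (y jj))]
  simp only [upd2_ii ii jj hij, upd2_jj, Matrix.sum_apply, Finset.mul_sum, Finset.sum_mul]
  rw [swap3, swap3]
  rw [← Finset.sum_sdiff (Finset.subset_univ ({ii, jj} : Finset (Fin n))),
    ← Finset.sum_sdiff (Finset.subset_univ ({ii, jj} : Finset (Fin n)))]
  have hOffx : ∀ (j : Fin n) (a b : Fin 2),
      (∏ k ∈ Finset.univ \ {ii, jj}, fac v A j k (upd2 ii jj x a b k) (y k))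
        = ∏ k ∈ Finset.univ \ {ii, jj}, fac v A j k (x k) (y k) := by
    intro j a b
    refine Finset.prod_congr rfl fun k hk => ?_
    simp only [Finset.mem_sdiff, Finset.mem_insert, Finset.mem_singleton] at hk
    rw [upd2_other (by tauto) (by tauto)]
  have hOffy : ∀ (j : Fin n) (a b : Fin 2),
      (∏ k ∈ Finset.univ \ {ii, jj}, fac v A j k (x k) (upd2 ii jj y a b k))
        = ∏ k ∈ Finset.univ \ {ii, jj}, fac v A j k (x k) (y k) := by
    intro j a b
    refine Finset.prod_congr rfl fun k hk => ?_
    simp only [Finset.mem_sdiff, Finset.mem_insert, Finset.mem_singleton] at hk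
    rw [upd2_other (by tauto) (by tauto)]
  congr 1
  · -- sum over univ \ {ii,jj}
    refine Finset.sum_congr rfl fun j hj => ?_
    simp only [Finset.mem_sdiff, Finset.mem_insert, Finset.mem_singleton, Finset.mem_univ,
      true_and] at hj
    push_neg at hj
    obtain ⟨hj1, hj2⟩ := hj
    simp only [site_split ii jj hij v A, upd2_ii ii jj hij, upd2_jj, hOffx, hOffy]
    rcases lt_or_gt_of_ne hj1 with hc | hc
    · -- j < ii : both sites above j, weight v⁻¹
      have hcj : j < jj := lt_trans hc hlt
      simp only [fac_gt v A hc, fac_gt v A hcj]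
      have h := loc1 v v⁻¹ (inv_ne_zero hv) (x ii) (x jj) (y ii) (y jj)
      simp only [Fin.sum_univ_two] at h ⊢
      linear_combination (∏ k ∈ Finset.univ \ {ii, jj}, fac v A j k (x k) (y k)) * h
    · -- ii < j, and j ≠ jj so jj < j : both sites below j, weight v
      have hcj : jj < j := by
        have hA : i < (j : ℕ) := Fin.lt_def.mp hc
        have hB : (j : ℕ) ≠ i + 1 := fun hh => hj2 (Fin.ext hh)
        exact Fin.lt_def.mpr (show i + 1 < (j : ℕ) by omega)
      simp only [fac_lt v A hc, fac_lt v A hcj]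
      have h := loc1 v v hv (x ii) (x jj) (y ii) (y jj)
      simp only [Fin.sum_univ_two] at h ⊢
      linear_combination (∏ k ∈ Finset.univ \ {ii, jj}, fac v A j k (x k) (y k)) * h
  · -- sum over {ii, jj}
    rw [Finset.sum_pair hij, Finset.sum_pair hij]
    have hOffEq : (∏ k ∈ Finset.univ \ {ii, jj}, fac v A ii k (x k) (y k))
        = ∏ k ∈ Finset.univ \ {ii, jj}, fac v A jj k (x k) (y k) := by
      refine Finset.prod_congr rfl fun k hk => ?_
      simp only [Finset.mem_sdiff, Finset.mem_insert, Finset.mem_singleton] at hk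
      have hk1 : k ≠ ii := by tauto
      have hk2 : k ≠ jj := by tauto
      rcases lt_or_gt_of_ne hk1 with hc | hc
      · rw [fac_lt v A hc, fac_lt v A (lt_trans hc hlt)]
      · have hcj : jj < k := by
          have hA : i < (k : ℕ) := Fin.lt_def.mp hc
          have hB : (k : ℕ) ≠ i + 1 := fun hh => hk2 (Fin.ext hh)
          exact Fin.lt_def.mpr (show i + 1 < (k : ℕ) by omega)
        rw [fac_gt v A hc, fac_gt v A hcj]
    simp only [site_split ii jj hij v A, upd2_ii ii jj hij, upd2_jj, hOffx, hOffy,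
      fac_self, fac_lt v A hlt, fac_gt v A hlt, hOffEq]
    have h := hloc (x ii) (x jj) (y ii) (y jj)
    simp only [Fin.sum_univ_two] at h ⊢
    linear_combination (∏ k ∈ Finset.univ \ {ii, jj}, fac v A jj k (x k) (y k)) * h

end S19

namespace S19

lemma locP (v : ℂ) (hv : v ≠ 0) (p q r s : Fin 2) :
    ((∑ a : Fin 2, ∑ b : Fin 2, Eloc (v ^ 2) p q a b *
        (sigmaP a r * (if b = s then Kdiag v⁻¹ b else 0))) +
     (∑ a : Fin 2, ∑ b : Fin 2, Eloc (v ^ 2) p q a b *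
        ((if a = r then Kdiag v a else 0) * sigmaP b s)))
    = ((∑ a : Fin 2, ∑ b : Fin 2,
        (sigmaP p a * (if q = b then Kdiag v⁻¹ q else 0)) * Eloc (v ^ 2) a b r s) +
       (∑ a : Fin 2, ∑ b : Fin 2,
        ((if p = a then Kdiag v p else 0) * sigmaP q b) * Eloc (v ^ 2) a b r s)) := by
  fin_cases p <;> fin_cases q <;> fin_cases r <;> fin_cases s <;>
    simp [Eloc, sigmaP, Kdiag, Fin.sum_univ_two] <;> field_simp <;> ring

lemma locM (v : ℂ) (hv : v ≠ 0) (p q r s : Fin 2) :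
    ((∑ a : Fin 2, ∑ b : Fin 2, Eloc (v ^ 2) p q a b *
        (sigmaM a r * (if b = s then Kdiag v⁻¹ b else 0))) +
     (∑ a : Fin 2, ∑ b : Fin 2, Eloc (v ^ 2) p q a b *
        ((if a = r then Kdiag v a else 0) * sigmaM b s)))
    = ((∑ a : Fin 2, ∑ b : Fin 2,
        (sigmaM p a * (if q = b then Kdiag v⁻¹ q else 0)) * Eloc (v ^ 2) a b r s) +
       (∑ a : Fin 2, ∑ b : Fin 2,
        ((if p = a then Kdiag v p else 0) * sigmaM q b) * Eloc (v ^ 2) a b r s)) := by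
  fin_cases p <;> fin_cases q <;> fin_cases r <;> fin_cases s <;>
    simp [Eloc, sigmaM, Kdiag, Fin.sum_univ_two] <;> field_simp <;> ring

end S19

/-- quantum Schur–Weyl commutation: each Temperley-Lieb generator
`E_i` commutes with `S^+` and `S^−` on `(ℂ²)^{⊗n}`, where `q = v²`. -/


theorem stmt19 (n : ℕ) (hn : 2 ≤ n) (v : ℂ) (hv : v ≠ 0)
    (i : ℕ) (h1 : i < n) (h2 : i + 1 < n) :
    EOp n (v ^ 2) i h1 h2 * SpOp n v = SpOp n v * EOp n (v ^ 2) i h1 h2 ∧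
    EOp n (v ^ 2) i h1 h2 * SmOp n v = SmOp n v * EOp n (v ^ 2) i h1 h2 := by
  constructor
  · rw [SpOp]
    exact S19.comm_general n v hv i h1 h2 sigmaP (S19.locP v hv)
  · rw [SmOp]
    exact S19.comm_general n v hv i h1 h2 sigmaM (S19.locM v hv)

end
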